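/- Let (Γ, 𝔊, η) be a minimal non-Kneser triple in which both Γ and 𝔊 are abelian. Then: (1) 𝔊 is an abelian p-group for some prime p, Γ acts faithfully on 𝔊, and η is injective; (2) the following are equivalent: Γ is a p-group; 𝔊^Γ ≠ {0}; 𝔊^Γ is cyclic of order p; |𝔊| = p·|Γ|, where 𝔊^Γ := {g ∈ 𝔊 : γ•g = g for all γ ∈ Γ}; (3) 𝔊 has a unique minimal nonzero Γ-invariant subgroup. -/

import Mathlib

/-!
Modulo an ideal `a` on which `η` is surjective, the fibres of `η` are the cosets of
`{γ | η γ ∈ a}`, so `[𝔊 : a]` divides `|Γ|`. As `|Γ| < |𝔊|`, two Sylow subgroups of `𝔊` for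
distinct primes would make `|𝔊|` divide `|Γ|`, so `𝔊` is a `p`-group.

Since `Γ` is abelian, `κ` acts trivially on `𝔊 = ⟨η Γ⟩` iff `η κ ∈ 𝔊^Γ`. This gives injectivity
of `η`, faithfulness (otherwise `η` would be surjective modulo the ideal `η (ker of the action)`,
hence surjective), and `[𝔊 : 𝔊^Γ] = |Γ|`. Every nontrivial `b ≤ 𝔊^Γ` is an ideal with
`[𝔊 : b] ∣ |Γ|`, so `b = 𝔊^Γ`: when nontrivial, `𝔊^Γ` has order `p`, and when moreover `Γ` is a
`p`-group it meets, hence lies in, every nontrivial ideal.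

If `𝔊^Γ = 1`, then also `𝔊^H = 1` for the Hall `p'`-subgroup `H` of `Γ`. Averaging the cocycle
identity over `H` shows that `η ^ |H|` is a coboundary, and as `|H|` is prime to `p`, `η` is
surjective modulo no proper ideal: `𝔊` itself is the unique minimal ideal.
-/

open Function MulAction groupCohomology

/-- The ideals of the `Γ`-group `𝔊`. -/
def Subgroup.IsInvariant (Γ : Type*) {𝔊 : Type*} [Group 𝔊] [SMul Γ 𝔊] (a : Subgroup 𝔊) : Prop :=
  ∀ (γ : Γ) (g : 𝔊), g ∈ a → γ • g ∈ a

namespace Subgroup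

variable {Γ 𝔊 : Type*} [Group 𝔊]

theorem isInvariant_top (Γ : Type*) [SMul Γ 𝔊] : (⊤ : Subgroup 𝔊).IsInvariant Γ :=
  fun _ _ _ => mem_top _

theorem IsInvariant.smul_mem_iff [Group Γ] [MulDistribMulAction Γ 𝔊] {a : Subgroup 𝔊}
    (ha : a.IsInvariant Γ) {γ : Γ} {g : 𝔊} : γ • g ∈ a ↔ g ∈ a :=
  ⟨fun h => inv_smul_smul γ g ▸ ha γ⁻¹ _ h, ha γ g⟩

theorem isInvariant_of_le_fixedPoints [Monoid Γ] [MulDistribMulAction Γ 𝔊] {a : Subgroup 𝔊}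
    (ha : a ≤ FixedPoints.subgroup Γ 𝔊) : a.IsInvariant Γ := fun γ g hg => by
  rwa [ha hg γ]

theorem Characteristic.isInvariant [Group Γ] [MulDistribMulAction Γ 𝔊] {a : Subgroup 𝔊}
    (ha : a.Characteristic) : a.IsInvariant Γ := fun γ _ hg =>
  characteristic_iff_le_comap.mp ha (MulDistribMulAction.toMulEquiv 𝔊 γ) hg

theorem isInvariant_fixedPoints_subgroup [CommGroup Γ] [MulDistribMulAction Γ 𝔊]
    (H : Subgroup Γ) : (FixedPoints.subgroup H 𝔊).IsInvariant Γ := fun γ g hg h => by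
  rw [smul_def, smul_smul, mul_comm, ← smul_smul, ← smul_def, hg h]

theorem IsInvariant.exists_ne_one_fixed [Group Γ] [Finite 𝔊] [MulDistribMulAction Γ 𝔊] {p : ℕ}
    [Fact p.Prime] (hΓ : IsPGroup p Γ) (h𝔊 : IsPGroup p 𝔊) {C : Subgroup 𝔊}
    (hC : C.IsInvariant Γ) (hne : C ≠ ⊥) : ∃ s ∈ C, s ≠ 1 ∧ ∀ γ : Γ, γ • s = s := by
  let C' : SubMulAction Γ 𝔊 := ⟨C, fun γ g hg => hC γ g hg⟩
  have : Nontrivial C := (nontrivial_iff_ne_bot C).mpr hne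
  have hdvd : p ∣ Nat.card C' :=
    (h𝔊.to_subgroup C).card_eq_or_dvd.resolve_left Finite.one_lt_card.ne'
  obtain ⟨s, hs, hne⟩ := hΓ.exists_fixed_point_of_prime_dvd_card_of_fixed_point C' hdvd
    (a := ⟨1, C.one_mem⟩) fun γ => Subtype.ext (smul_one γ)
  exact ⟨s, s.2, fun h => hne (Subtype.ext h.symm), fun γ => congrArg Subtype.val (hs γ)⟩

theorem IsInvariant.fixedPoints_subgroup_le [Group Γ] [Finite 𝔊] [MulDistribMulAction Γ 𝔊]
    {p : ℕ} [hp : Fact p.Prime] (hΓ : IsPGroup p Γ) (h𝔊 : IsPGroup p 𝔊)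
    (hF : Nat.card (FixedPoints.subgroup Γ 𝔊) = p) {m : Subgroup 𝔊} (hm : m.IsInvariant Γ)
    (hne : m ≠ ⊥) : FixedPoints.subgroup Γ 𝔊 ≤ m := by
  obtain ⟨s, hsm, hs1, hs⟩ := hm.exists_ne_one_fixed hΓ h𝔊 hne
  have hsF : zpowers s ≤ FixedPoints.subgroup Γ 𝔊 := zpowers_le.mpr hs
  have hcard : Nat.card (zpowers s) = p :=
    ((Nat.dvd_prime hp.out).mp (hF ▸ card_dvd_of_le hsF)).resolve_left fun h =>
      hs1 (zpowers_eq_bot.mp (card_eq_one.mp h))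
  rw [← eq_of_le_of_card_ge hsF (hF.trans hcard.symm).le]
  exact zpowers_le.mpr hsm

theorem existsUnique_minimal_isInvariant [SMul Γ 𝔊] {m₀ : Subgroup 𝔊} (hne : m₀ ≠ ⊥)
    (hinv : m₀.IsInvariant Γ) (hle : ∀ m : Subgroup 𝔊, m ≠ ⊥ → m.IsInvariant Γ → m₀ ≤ m) :
    ∃! m : Subgroup 𝔊, m ≠ ⊥ ∧ m.IsInvariant Γ ∧
      ∀ m' : Subgroup 𝔊, m' ≠ ⊥ → m'.IsInvariant Γ → m' ≤ m → m' = m :=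
  ⟨m₀, ⟨hne, hinv, fun m' hm' hinv' hle' => le_antisymm hle' (hle m' hm' hinv')⟩,
    fun _ ⟨hm, hinvm, hmin⟩ => (hmin m₀ hne hinv (hle _ hm hinvm)).symm⟩

theorem fixedPoints_subgroup_eq_bot_of_sup_eq_top [CommGroup Γ] [Finite 𝔊]
    [MulDistribMulAction Γ 𝔊] {p : ℕ} [Fact p.Prime] {H P : Subgroup Γ} (hHP : H ⊔ P = ⊤)
    (hP : IsPGroup p P) (h𝔊 : IsPGroup p 𝔊) (hF : FixedPoints.subgroup Γ 𝔊 = ⊥) :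
    FixedPoints.subgroup H 𝔊 = ⊥ := by
  by_contra hne
  have hinv : (FixedPoints.subgroup H 𝔊).IsInvariant P := fun π g hg =>
    isInvariant_fixedPoints_subgroup H π g hg
  obtain ⟨s, hsH, hs1, hsP⟩ := hinv.exists_ne_one_fixed hP h𝔊 hne
  have hstab : H ⊔ P ≤ stabilizer Γ s := sup_le (fun h hh => hsH ⟨h, hh⟩) fun π hπ => hsP ⟨π, hπ⟩
  have hsF : s ∈ FixedPoints.subgroup Γ 𝔊 := fun γ => hstab (hHP ▸ mem_top γ)
  rw [hF] at hsF
  exact hs1 (mem_bot.mp hsF)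

end Subgroup

/-- As `u`-th powers are bijective on `𝔊`, modulo `a` every element is some `γ • x / x`; the
element `x⁻¹` then shows `x ∈ a`. -/
theorem Subgroup.IsInvariant.eq_top_of_isMulCoboundary₁_pow {Γ 𝔊 : Type*} [Group Γ]
    [CommGroup 𝔊] [Finite 𝔊] [MulDistribMulAction Γ 𝔊] {p u : ℕ} (h𝔊 : IsPGroup p 𝔊)
    (hu : p.Coprime u) {η : Γ → 𝔊} (hcob : IsMulCoboundary₁ fun γ => η γ ^ u) {a : Subgroup 𝔊}
    (ha : a.IsInvariant Γ) (hs : Surjective fun γ => (η γ : 𝔊 ⧸ a)) : a = ⊤ := by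
  obtain ⟨x, hx⟩ := hcob
  have hmk (g : 𝔊) : ∃ γ : Γ, (g : 𝔊 ⧸ a) = ((γ • x / x : 𝔊) : 𝔊 ⧸ a) := by
    obtain ⟨γ, hγ⟩ := hs ((h𝔊.powEquiv hu).symm g)
    change (η γ : 𝔊 ⧸ a) = _ at hγ
    refine ⟨γ, ?_⟩
    rw [hx, QuotientGroup.mk_pow, hγ, ← QuotientGroup.mk_pow, ← h𝔊.powEquiv_apply hu,
      Equiv.apply_symm_apply]
  obtain ⟨γ, hγ⟩ := hmk x⁻¹
  have hxa : x ∈ a := ha.smul_mem_iff.mp (by simpa using QuotientGroup.eq.mp hγ)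
  refine eq_top_iff.mpr fun g _ => ?_
  obtain ⟨γ', hγ'⟩ := hmk g
  rw [← QuotientGroup.eq_one_iff, hγ', QuotientGroup.eq_one_iff]
  exact div_mem (ha γ' x hxa) hxa

/-- If `[G : P]` and `[G : Q]` divide `n` for Sylow subgroups `P`, `Q` at distinct primes, then
the coprime numbers `[G : P]` and `|P|` (which divides `[G : Q]`) both divide `n`, hence so
does `|G|`. -/
theorem exists_isPGroup_of_card_quotient_dvd {G : Type*} [CommGroup G] [Finite G] {n : ℕ}
    (h : ∀ a : Subgroup G, a.Characteristic → a ≠ ⊥ → Nat.card (G ⧸ a) ∣ n)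
    (hG : ¬ Nat.card G ∣ n) : ∃ p, p.Prime ∧ IsPGroup p G := by
  obtain ⟨p, hp, hpG⟩ := Nat.exists_prime_and_dvd (n := Nat.card G) fun h1 => hG (h1 ▸ one_dvd n)
  have := Fact.mk hp
  obtain ⟨P⟩ : Nonempty (Sylow p G) := inferInstance
  refine ⟨p, hp, IsPGroup.of_card (n := Nat.factorization (Nat.card G) p) ?_⟩
  rw [← P.card_eq_multiplicity, ← (P : Subgroup G).card_mul_index]
  by_contra hPG
  obtain ⟨q, hq, hqP⟩ := Nat.exists_prime_and_dvd (n := (P : Subgroup G).index) fun h1 =>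
    hPG (by rw [h1, mul_one])
  have := Fact.mk hq
  have hqp : q ≠ p := fun hqp => P.not_dvd_index (hqp ▸ hqP)
  obtain ⟨Q⟩ : Nonempty (Sylow q G) := inferInstance
  have hchar {r : ℕ} [Fact r.Prime] (R : Sylow r G) : (R : Subgroup G).Characteristic :=
    R.characteristic_of_normal inferInstance
  have hP := h P (hchar P) (P.ne_bot_of_dvd_card hpG)
  have hQ := h Q (hchar Q) (Q.ne_bot_of_dvd_card (hqP.trans (P : Subgroup G).index_dvd_card))
  have hcop : (Nat.card P).Coprime (Nat.card Q) := by
    rw [P.card_eq_multiplicity, Q.card_eq_multiplicity]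
    exact Nat.coprime_pow_primes _ _ hp hq hqp.symm
  have hPQ : Nat.card P ∣ (Q : Subgroup G).index :=
    hcop.dvd_of_dvd_mul_left ((Q : Subgroup G).card_mul_index ▸ P.card_subgroup_dvd_card)
  exact hG ((P : Subgroup G).card_mul_index ▸
    P.card_coprime_index.mul_dvd_of_dvd_of_dvd (hPQ.trans hQ) hP)

theorem exists_coprime_card_isPGroup_sup_eq_top {Γ : Type*} [CommGroup Γ] [Finite Γ] (p : ℕ)
    [Fact p.Prime] : ∃ H P : Subgroup Γ, p.Coprime (Nat.card H) ∧ IsPGroup p P ∧ H ⊔ P = ⊤ := by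
  obtain ⟨P⟩ : Nonempty (Sylow p Γ) := inferInstance
  obtain ⟨H, hH⟩ := Subgroup.exists_left_complement'_of_coprime P.card_coprime_index
  exact ⟨H, P, hH.index_eq_card ▸ (Fact.out : p.Prime).coprime_iff_not_dvd.mpr P.not_dvd_index,
    P.isPGroup', hH.sup_eq_top⟩

theorem prod_smul_mem_fixedPoints_subgroup {H 𝔊 : Type*} [Group H] [Fintype H] [CommGroup 𝔊]
    [MulDistribMulAction H 𝔊] (x : 𝔊) : ∏ h : H, h • x ∈ FixedPoints.subgroup H 𝔊 := by
  intro h'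
  rw [Finset.smul_prod']
  simp_rw [smul_smul]
  exact Fintype.prod_equiv (Equiv.mulLeft h') _ _ fun _ => rfl

namespace groupCohomology.IsMulCocycle₁

section Group

variable {Γ 𝔊 : Type*} [Group Γ] [CommGroup 𝔊] [MulDistribMulAction Γ 𝔊] {η : Γ → 𝔊}

theorem map_inv_mul (hη : IsMulCocycle₁ η) (σ τ : Γ) : η (σ⁻¹ * τ) = σ⁻¹ • (η τ / η σ) := by
  have h := map_inv_of_isMulCocycle₁ hη σ⁻¹
  rw [inv_inv] at h
  rw [hη, smul_div', h, div_inv_eq_mul]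

/-- Its cosets are the fibres of `η` modulo `a`. -/
def comap (hη : IsMulCocycle₁ η) {a : Subgroup 𝔊} (ha : a.IsInvariant Γ) : Subgroup Γ where
  carrier := {γ | η γ ∈ a}
  one_mem' := by simp [map_one_of_isMulCocycle₁ hη]
  mul_mem' {σ τ} hσ hτ := by
    rw [Set.mem_ofPred_eq, hη]
    exact mul_mem (ha σ _ hτ) hσ
  inv_mem' {σ} hσ := by
    rw [Set.mem_ofPred_eq, ← mul_one σ⁻¹, hη.map_inv_mul, map_one_of_isMulCocycle₁ hη]
    exact ha _ _ (div_mem a.one_mem hσ)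

theorem mk_eq_mk_iff (hη : IsMulCocycle₁ η) {a : Subgroup 𝔊} (ha : a.IsInvariant Γ) (σ τ : Γ) :
    (η σ : 𝔊 ⧸ a) = η τ ↔ σ⁻¹ * τ ∈ hη.comap ha := by
  rw [QuotientGroup.eq, ← div_eq_inv_mul, ← ha.smul_mem_iff (γ := σ⁻¹), ← hη.map_inv_mul]
  rfl

theorem card_eq_card_quotient_mul_card_comap [Finite Γ] (hη : IsMulCocycle₁ η)
    {a : Subgroup 𝔊} (ha : a.IsInvariant Γ) (hs : Surjective fun γ => (η γ : 𝔊 ⧸ a)) :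
    Nat.card Γ = Nat.card (𝔊 ⧸ a) * Nat.card (hη.comap ha) := by
  rw [(hη.comap ha).card_eq_card_quotient_mul_card_subgroup]
  congr 1
  refine Nat.card_congr ((Quotient.congrRight fun σ τ => ?_).trans
    (Setoid.quotientKerEquivOfSurjective _ hs))
  rw [QuotientGroup.leftRel_apply, ← hη.mk_eq_mk_iff ha]
  rfl

theorem card_quotient_dvd_card [Finite Γ] (hη : IsMulCocycle₁ η) {a : Subgroup 𝔊}
    (ha : a.IsInvariant Γ) (hs : Surjective fun γ => (η γ : 𝔊 ⧸ a)) :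
    Nat.card (𝔊 ⧸ a) ∣ Nat.card Γ :=
  Dvd.intro _ (hη.card_eq_card_quotient_mul_card_comap ha hs).symm

end Group

variable {Γ 𝔊 : Type*} [CommGroup Γ] [CommGroup 𝔊] [MulDistribMulAction Γ 𝔊] {η : Γ → 𝔊}

theorem smul_eq_iff_smul_eq (hη : IsMulCocycle₁ η) (σ κ : Γ) :
    σ • η κ = η κ ↔ κ • η σ = η σ := by
  have h : σ • η κ * η σ = κ • η σ * η κ := by rw [← hη, ← hη, mul_comm]
  constructor <;> intro h' <;> rw [h'] at h
  · exact (mul_right_cancel ((mul_comm _ _).trans h)).symm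
  · exact mul_right_cancel (h.trans (mul_comm _ _))

theorem mem_fixedPoints_iff (hη : IsMulCocycle₁ η) (hgen : Subgroup.closure (Set.range η) = ⊤)
    (κ : Γ) : η κ ∈ FixedPoints.subgroup Γ 𝔊 ↔ ∀ g : 𝔊, κ • g = g := by
  refine ⟨fun h g => ?_, fun h σ => (hη.smul_eq_iff_smul_eq σ κ).mpr (h _)⟩
  have := MonoidHom.eq_of_eqOn_dense hgen (f := MulDistribMulAction.toMonoidHom 𝔊 κ)
    (g := MonoidHom.id 𝔊) (by rintro _ ⟨σ, rfl⟩; exact (hη.smul_eq_iff_smul_eq σ κ).mp (h σ))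
  exact DFunLike.congr_fun this g

theorem injective (hη : IsMulCocycle₁ η) (hgen : Subgroup.closure (Set.range η) = ⊤)
    (hnorm : ∀ x : Γ, (∀ g : 𝔊, x • g = g) → η x = 1 → x = 1) : Injective η := by
  intro σ τ h
  have h1 : η (σ⁻¹ * τ) = 1 := by rw [hη.map_inv_mul, h, div_self', smul_one]
  have hfix := (hη.mem_fixedPoints_iff hgen _).mp (h1 ▸ Subgroup.one_mem _)
  exact inv_mul_eq_one.mp (hnorm _ hfix h1)

def restrictFixingSubgroup (hη : IsMulCocycle₁ η) :
    fixingSubgroup Γ (Set.univ : Set 𝔊) →* 𝔊 where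
  toFun t := η t
  map_one' := map_one_of_isMulCocycle₁ hη
  map_mul' s t := by
    rw [Subgroup.coe_mul, hη, (mem_fixingSubgroup_iff Γ).mp s.2 _ trivial, mul_comm]

theorem range_restrictFixingSubgroup_le (hη : IsMulCocycle₁ η) :
    hη.restrictFixingSubgroup.range ≤ FixedPoints.subgroup Γ 𝔊 := by
  rintro _ ⟨t, rfl⟩ σ
  exact (hη.smul_eq_iff_smul_eq σ t).mpr ((mem_fixingSubgroup_iff Γ).mp t.2 _ trivial)

theorem surjective_of_surjective_mk_range (hη : IsMulCocycle₁ η)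
    (hs : Surjective fun γ => (η γ : 𝔊 ⧸ hη.restrictFixingSubgroup.range)) : Surjective η := by
  intro g
  obtain ⟨γ, hγ⟩ := hs g
  obtain ⟨t, ht⟩ := QuotientGroup.eq.mp hγ
  refine ⟨γ * t, ?_⟩
  change η t = _ at ht
  rw [hη, show γ • η t = η t from hη.range_restrictFixingSubgroup_le ⟨t, rfl⟩ γ, ht,
    inv_mul_cancel_comm]

theorem faithful (hη : IsMulCocycle₁ η) (hns : ¬ Surjective η)
    (hsurj : ∀ a : Subgroup 𝔊, a.IsInvariant Γ → a ≠ ⊥ → Surjective fun γ => (η γ : 𝔊 ⧸ a))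
    (hnorm : ∀ x : Γ, (∀ g : 𝔊, x • g = g) → η x = 1 → x = 1) :
    ∀ x : Γ, (∀ g : 𝔊, x • g = g) → x = 1 := by
  intro x hx
  refine hnorm x hx (by_contra fun hne => hns (hη.surjective_of_surjective_mk_range ?_))
  refine hsurj _ (Subgroup.isInvariant_of_le_fixedPoints hη.range_restrictFixingSubgroup_le)
    fun h => hne ?_
  exact Subgroup.mem_bot.mp
    (h ▸ MonoidHom.mem_range.mpr ⟨⟨x, (mem_fixingSubgroup_iff Γ).mpr fun g _ => hx g⟩, rfl⟩)

theorem comap_fixedPoints_eq_bot (hη : IsMulCocycle₁ η)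
    (hgen : Subgroup.closure (Set.range η) = ⊤) (hfaith : ∀ x : Γ, (∀ g : 𝔊, x • g = g) → x = 1) :
    hη.comap (Subgroup.isInvariant_of_le_fixedPoints le_rfl) = ⊥ :=
  eq_bot_iff.mpr fun κ hκ => hfaith κ ((hη.mem_fixedPoints_iff hgen κ).mp hκ)

theorem index_fixedPoints_eq_card [Finite Γ] (hη : IsMulCocycle₁ η)
    (hgen : Subgroup.closure (Set.range η) = ⊤) (hfaith : ∀ x : Γ, (∀ g : 𝔊, x • g = g) → x = 1)
    (hs : Surjective fun γ => (η γ : 𝔊 ⧸ FixedPoints.subgroup Γ 𝔊)) :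
    (FixedPoints.subgroup Γ 𝔊).index = Nat.card Γ := by
  rw [hη.card_eq_card_quotient_mul_card_comap (Subgroup.isInvariant_of_le_fixedPoints le_rfl) hs,
    hη.comap_fixedPoints_eq_bot hgen hfaith, Subgroup.card_bot, mul_one, Subgroup.index_eq_card]

/-- `[𝔊 : b]` divides `|Γ| = [𝔊 : 𝔊^Γ]`. -/
theorem fixedPoints_le_of_le [Finite Γ] (hη : IsMulCocycle₁ η)
    (hgen : Subgroup.closure (Set.range η) = ⊤) (hfaith : ∀ x : Γ, (∀ g : 𝔊, x • g = g) → x = 1)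
    (hs : Surjective fun γ => (η γ : 𝔊 ⧸ FixedPoints.subgroup Γ 𝔊)) {b : Subgroup 𝔊}
    (hb : b ≤ FixedPoints.subgroup Γ 𝔊) (hsb : Surjective fun γ => (η γ : 𝔊 ⧸ b)) :
    FixedPoints.subgroup Γ 𝔊 ≤ b := by
  have h := hη.card_quotient_dvd_card (Subgroup.isInvariant_of_le_fixedPoints hb) hsb
  rw [← Subgroup.index_eq_card, ← hη.index_fixedPoints_eq_card hgen hfaith hs,
    ← Subgroup.relIndex_mul_index hb] at h
  have hpos : 0 < (FixedPoints.subgroup Γ 𝔊).index :=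
    (hη.index_fixedPoints_eq_card hgen hfaith hs).symm ▸ Nat.card_pos
  exact Subgroup.relIndex_eq_one.mp
    (Nat.dvd_one.mp ((Nat.mul_dvd_mul_iff_right hpos).mp (by rwa [one_mul])))

theorem card_fixedPoints_eq_prime [Finite Γ] [Finite 𝔊] (hη : IsMulCocycle₁ η)
    (hgen : Subgroup.closure (Set.range η) = ⊤) (hfaith : ∀ x : Γ, (∀ g : 𝔊, x • g = g) → x = 1)
    (hsurj : ∀ b : Subgroup 𝔊, b ≤ FixedPoints.subgroup Γ 𝔊 → b ≠ ⊥ →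
      Surjective fun γ => (η γ : 𝔊 ⧸ b))
    {p : ℕ} [hp : Fact p.Prime] (h𝔊 : IsPGroup p 𝔊) (hF : FixedPoints.subgroup Γ 𝔊 ≠ ⊥) :
    Nat.card (FixedPoints.subgroup Γ 𝔊) = p := by
  have : Nontrivial (FixedPoints.subgroup Γ 𝔊) := (Subgroup.nontrivial_iff_ne_bot _).mpr hF
  obtain ⟨x, hx⟩ := exists_prime_orderOf_dvd_card' (G := FixedPoints.subgroup Γ 𝔊) p
    ((h𝔊.to_subgroup _).card_eq_or_dvd.resolve_left Finite.one_lt_card.ne')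
  have hxF : Subgroup.zpowers (x : 𝔊) ≤ FixedPoints.subgroup Γ 𝔊 := Subgroup.zpowers_le.mpr x.2
  have hne : Subgroup.zpowers (x : 𝔊) ≠ ⊥ := Subgroup.zpowers_ne_bot.mpr fun h =>
    hp.out.ne_one (hx ▸ orderOf_eq_one_iff.mpr (Subtype.ext h))
  have hFx := hη.fixedPoints_le_of_le hgen hfaith (hsurj _ le_rfl hF) hxF (hsurj _ hxF hne)
  rw [← le_antisymm hxF hFx, Nat.card_zpowers, Subgroup.orderOf_coe, hx]

theorem tfae_isPGroup [Finite Γ] [Finite 𝔊] [Nontrivial 𝔊] (hη : IsMulCocycle₁ η)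
    (hgen : Subgroup.closure (Set.range η) = ⊤) (hfaith : ∀ x : Γ, (∀ g : 𝔊, x • g = g) → x = 1)
    (hsurj : ∀ b : Subgroup 𝔊, b ≤ FixedPoints.subgroup Γ 𝔊 → b ≠ ⊥ →
      Surjective fun γ => (η γ : 𝔊 ⧸ b))
    {p : ℕ} [hp : Fact p.Prime] (h𝔊 : IsPGroup p 𝔊) :
    List.TFAE
      [IsPGroup p Γ,
       FixedPoints.subgroup Γ 𝔊 ≠ ⊥,
       IsCyclic (FixedPoints.subgroup Γ 𝔊) ∧ Nat.card (FixedPoints.subgroup Γ 𝔊) = p,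
       Nat.card 𝔊 = p * Nat.card Γ] := by
  have hcard := hη.card_fixedPoints_eq_prime hgen hfaith hsurj h𝔊
  tfae_have 1 → 2 := fun hΓ hF => by
    obtain ⟨s, -, hs1, hs⟩ := (Subgroup.isInvariant_top Γ).exists_ne_one_fixed hΓ h𝔊 top_ne_bot
    have hsF : s ∈ FixedPoints.subgroup Γ 𝔊 := hs
    rw [hF] at hsF
    exact hs1 (Subgroup.mem_bot.mp hsF)
  tfae_have 2 → 3 := fun hF => ⟨isCyclic_of_prime_card (hcard hF), hcard hF⟩
  tfae_have 3 → 4 := fun ⟨_, h⟩ => by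
    have hF : FixedPoints.subgroup Γ 𝔊 ≠ ⊥ := fun hF =>
      hp.out.ne_one (by rw [← h, hF, Subgroup.card_bot])
    rw [← (FixedPoints.subgroup Γ 𝔊).card_mul_index, hcard hF,
      hη.index_fixedPoints_eq_card hgen hfaith (hsurj _ le_rfl hF)]
  tfae_have 4 → 1 := fun h => by
    obtain ⟨n, hn⟩ := h𝔊.exists_card_eq
    obtain ⟨m, -, hm⟩ := (Nat.dvd_prime_pow hp.out).mp (hn ▸ h ▸ Dvd.intro_left p rfl)
    exact IsPGroup.of_card hm
  tfae_finish

/-- Compare `∏ h, η (γ * h)` with `∏ h, η (h * γ)`: the `H`-norm `∏ h, h • η γ` is `H`-fixed,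
hence trivial. -/
theorem isMulCoboundary₁_pow_card (hη : IsMulCocycle₁ η) (H : Subgroup Γ) [Fintype H]
    (hH : FixedPoints.subgroup H 𝔊 = ⊥) : IsMulCoboundary₁ fun γ => η γ ^ Fintype.card H := by
  refine ⟨(∏ h : H, η h)⁻¹, fun γ => ?_⟩
  have hnorm : ∏ h : H, (h : Γ) • η γ = 1 := by
    have := prod_smul_mem_fixedPoints_subgroup (H := H) (η γ)
    rw [hH] at this
    exact Subgroup.mem_bot.mp this
  have key : (γ • ∏ h : H, η h) * η γ ^ Fintype.card H = ∏ h : H, η h := calc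
    _ = ∏ h : H, η (γ * h) := by
      simp_rw [hη γ, Finset.prod_mul_distrib, Finset.smul_prod', Finset.prod_const,
        Finset.card_univ]
    _ = ∏ h : H, η (h * γ) := by simp_rw [mul_comm γ]
    _ = ∏ h : H, η h := by simp_rw [hη _ γ, Finset.prod_mul_distrib, hnorm, one_mul]
  rw [smul_inv', inv_div_inv, div_eq_iff_eq_mul']
  exact key.symm

theorem eq_top_of_fixedPoints_eq_bot [Finite Γ] [Finite 𝔊] (hη : IsMulCocycle₁ η) {p : ℕ}
    [Fact p.Prime] (h𝔊 : IsPGroup p 𝔊) (hF : FixedPoints.subgroup Γ 𝔊 = ⊥) {a : Subgroup 𝔊}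
    (ha : a.IsInvariant Γ) (hs : Surjective fun γ => (η γ : 𝔊 ⧸ a)) : a = ⊤ := by
  obtain ⟨H, P, hH, hP, hHP⟩ := exists_coprime_card_isPGroup_sup_eq_top (Γ := Γ) p
  have := Fintype.ofFinite H
  refine ha.eq_top_of_isMulCoboundary₁_pow h𝔊 (Nat.card_eq_fintype_card (α := H) ▸ hH)
    (hη.isMulCoboundary₁_pow_card H ?_) hs
  exact Subgroup.fixedPoints_subgroup_eq_bot_of_sup_eq_top hHP hP h𝔊 hF

end groupCohomology.IsMulCocycle₁

/-- Let `(Γ, 𝔊, η)` be a minimal non-Kneser triple with both `Γ` and `𝔊` abelian.  Then: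
(1) `𝔊` is an abelian `p`-group for some prime `p`, `Γ` acts faithfully on `𝔊`, and `η` is
injective;
(2) the following are equivalent: `Γ` is a `p`-group; `𝔊^Γ ≠ {1}`; `𝔊^Γ` is cyclic of order
`p`; `|𝔊| = p·|Γ|`;
(3) `𝔊` has a unique minimal nontrivial `Γ`-invariant subgroup. -/
theorem minimal_nonKneser_abelian
    {Γ 𝔊 : Type*} [CommGroup Γ] [Finite Γ] [CommGroup 𝔊] [Finite 𝔊]
    [MulDistribMulAction Γ 𝔊] (η : Γ → 𝔊)
    (hcoc : ∀ σ τ : Γ, η (σ * τ) = η σ * σ • η τ)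
    (hgen : Subgroup.closure (Set.range η) = ⊤)
    (hns : ¬ Function.Surjective η)
    (hmin : ∀ a : Subgroup 𝔊, a.Normal → (∀ (γ : Γ) (g : 𝔊), g ∈ a → γ • g ∈ a) → a ≠ ⊥ →
        Function.Surjective (fun γ : Γ => (QuotientGroup.mk (η γ) : 𝔊 ⧸ a)))
    (hnorm : ∀ x : Γ, (∀ g : 𝔊, x • g = g) → η x = 1 → x = 1) :
    ∃ p : ℕ, p.Prime ∧
      -- (1)
      IsPGroup p 𝔊 ∧
      (∀ x : Γ, (∀ g : 𝔊, x • g = g) → x = 1) ∧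
      Function.Injective η ∧
      -- (2)
      List.TFAE
        [IsPGroup p Γ,
         FixedPoints.subgroup Γ 𝔊 ≠ ⊥,
         IsCyclic (FixedPoints.subgroup Γ 𝔊) ∧ Nat.card (FixedPoints.subgroup Γ 𝔊) = p,
         Nat.card 𝔊 = p * Nat.card Γ] ∧
      -- (3)
      (∃! m : Subgroup 𝔊, m ≠ ⊥ ∧ (∀ (γ : Γ) (g : 𝔊), g ∈ m → γ • g ∈ m) ∧
        ∀ m' : Subgroup 𝔊, m' ≠ ⊥ → (∀ (γ : Γ) (g : 𝔊), g ∈ m' → γ • g ∈ m') →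
          m' ≤ m → m' = m) := by
  have hη : IsMulCocycle₁ η := fun σ τ => (hcoc σ τ).trans (mul_comm _ _)
  have hsurj (a : Subgroup 𝔊) (ha : a.IsInvariant Γ) (hne : a ≠ ⊥) :
      Surjective fun γ => (η γ : 𝔊 ⧸ a) := hmin a inferInstance ha hne
  have hinj := hη.injective hgen hnorm
  have hfaith := hη.faithful hns hsurj hnorm
  have hlt : Nat.card Γ < Nat.card 𝔊 :=
    lt_of_not_ge fun hle => hns (hinj.bijective_of_nat_card_le hle).surjective
  have : Nontrivial 𝔊 := Finite.one_lt_card_iff_nontrivial.mp (lt_of_le_of_lt Nat.card_pos hlt)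
  obtain ⟨p, hp, h𝔊⟩ := exists_isPGroup_of_card_quotient_dvd
    (fun a ha hne => hη.card_quotient_dvd_card ha.isInvariant (hsurj a ha.isInvariant hne))
    (Nat.not_dvd_of_pos_of_lt Nat.card_pos hlt)
  have := Fact.mk hp
  have htfae := hη.tfae_isPGroup hgen hfaith
    (fun b hb => hsurj b (Subgroup.isInvariant_of_le_fixedPoints hb)) h𝔊
  refine ⟨p, hp, h𝔊, hfaith, hinj, htfae, ?_⟩
  by_cases hF : FixedPoints.subgroup Γ 𝔊 = ⊥
  · exact Subgroup.existsUnique_minimal_isInvariant top_ne_bot (Subgroup.isInvariant_top Γ)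
      fun m hm hinv => (hη.eq_top_of_fixedPoints_eq_bot h𝔊 hF hinv (hsurj m hinv hm)).ge
  · have hΓ : IsPGroup p Γ := (htfae.out 0 1).mpr hF
    obtain ⟨-, hcard⟩ : IsCyclic (FixedPoints.subgroup Γ 𝔊) ∧
        Nat.card (FixedPoints.subgroup Γ 𝔊) = p := (htfae.out 1 2).mp hF
    exact Subgroup.existsUnique_minimal_isInvariant hF
      (Subgroup.isInvariant_of_le_fixedPoints le_rfl) fun m hm hinv =>
        hinv.fixedPoints_subgroup_le hΓ h𝔊 hcard hm
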